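/- For every positive integer i and every y > 1, the function x ↦ |ψ^(i)(x)| + |ψ^(i)(y)| − |ψ^(i)(xy)| tends to |ψ^(i)(y)| as x → ∞, and is strictly positive for all x ∈ (0, ∞). -/

import Mathlib

noncomputable def digamma : ℝ → ℝ := deriv (fun x => Real.log (Real.Gamma x))

noncomputable def polygamma (i : ℕ) : ℝ → ℝ := iteratedDeriv i digamma

/-!
Differentiating the Bohr–Mollerup approximants `log Γₙ` of `log Γ`, whose derivatives converge
locally uniformly, gives `ψ(x) = -γ - 1/x + ∑ₘ (1/(m+1) - 1/(x+m+1))` for `x > 0`. Termwise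
differentiation then yields `|ψ⁽ⁱ⁾(x)| = i! ζ(i+1, x)` with `ζ(k, x) = ∑ₘ (x+m)⁻ᵏ`, which is
positive, strictly decreasing and tends to `0` at infinity. Hence for `y > 1` the difference
`|ψ⁽ⁱ⁾(x)| - |ψ⁽ⁱ⁾(xy)|` is positive and both terms vanish as `x → ∞`.
-/

open Filter Topology Set

noncomputable def hurwitzSeries (k : ℕ) (x : ℝ) : ℝ := ∑' m : ℕ, ((x + m) ^ k)⁻¹

lemma summable_inv_add_nat_pow {k : ℕ} (hk : 2 ≤ k) (x : ℝ) :
    Summable fun m : ℕ => ((x + m) ^ k)⁻¹ := by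
  refine .of_norm (((Real.summable_one_div_nat_add_rpow x k).2 (by exact_mod_cast hk)).congr
    fun m => ?_)
  rw [Real.rpow_natCast, norm_inv, norm_pow, Real.norm_eq_abs, add_comm, one_div]

lemma hurwitzSeries_pos {k : ℕ} (hk : 2 ≤ k) {x : ℝ} (hx : 0 < x) : 0 < hurwitzSeries k x :=
  (summable_inv_add_nat_pow hk x).tsum_pos (fun m => by positivity) 0
    (by simp only [Nat.cast_zero, add_zero]; positivity)

lemma hurwitzSeries_strictAntiOn {k : ℕ} (hk : 2 ≤ k) :
    StrictAntiOn (hurwitzSeries k) (Ioi 0) := by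
  intro x (hx : 0 < x) x' (hx' : 0 < x') hxx'
  refine Summable.tsum_lt_tsum_of_nonneg (i := 0) (fun m => by positivity) (fun m => ?_) ?_
    (summable_inv_add_nat_pow hk x)
  · gcongr
  · simp only [Nat.cast_zero, add_zero]
    gcongr

lemma tendsto_hurwitzSeries_atTop {k : ℕ} (hk : 2 ≤ k) :
    Tendsto (hurwitzSeries k) atTop (𝓝 0) := by
  have hterm (m : ℕ) : Tendsto (fun x : ℝ => ((x + m) ^ k)⁻¹) atTop (𝓝 0) :=
    tendsto_inv_atTop_zero.comp <|
      (tendsto_pow_atTop (by omega)).comp (tendsto_atTop_add_const_right _ _ tendsto_id)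
  have := tendsto_tsum_of_dominated_convergence (summable_inv_add_nat_pow hk 1) hterm <| by
    filter_upwards [eventually_ge_atTop 1] with x hx m
    rw [Real.norm_of_nonneg (by positivity)]
    gcongr
  rwa [tsum_zero] at this

lemma hasDerivAt_inv_add_pow (k : ℕ) {a y : ℝ} (h : y + a ≠ 0) :
    HasDerivAt (fun z => ((z + a) ^ k)⁻¹) (-k * ((y + a) ^ (k + 1))⁻¹) y := by
  have := (hasDerivAt_zpow (-k) (y + a) (.inl h)).comp_add_const y a
  simp only [zpow_neg, zpow_natCast] at this
  refine this.congr_deriv ?_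
  rw [show -(k : ℤ) - 1 = -((k + 1 : ℕ) : ℤ) by push_cast; ring, zpow_neg, zpow_natCast]
  push_cast
  ring

lemma hasDerivAt_hurwitzSeries {k : ℕ} (hk : 2 ≤ k) {x : ℝ} (hx : 0 < x) :
    HasDerivAt (hurwitzSeries k) (-k * hurwitzSeries (k + 1) x) x := by
  have hpos {y : ℝ} (hy : y ∈ Ioi (x / 2)) (m : ℕ) : 0 < x / 2 + m ∧ x / 2 + m ≤ y + m :=
    ⟨by positivity, by have : x / 2 < y := hy; linarith⟩
  rw [hurwitzSeries, ← tsum_mul_left]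
  refine hasDerivAt_tsum_of_isPreconnected (t := Ioi (x / 2)) (y₀ := x)
    ((summable_inv_add_nat_pow (k := k + 1) (by omega) (x / 2)).mul_left (k : ℝ)) isOpen_Ioi
    isPreconnected_Ioi
    (fun m y hy => hasDerivAt_inv_add_pow k ((hpos hy m).1.trans_le (hpos hy m).2).ne')
    (fun m y hy => ?_) (by simp; linarith) (summable_inv_add_nat_pow hk x) (by simp; linarith)
  obtain ⟨h0, hle⟩ := hpos hy m
  rw [norm_mul, norm_neg, Real.norm_natCast,
    Real.norm_of_nonneg (by have := h0.trans_le hle; positivity)]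
  gcongr

noncomputable def digammaSeries (x : ℝ) : ℝ :=
  -Real.eulerMascheroniConstant - x⁻¹ + ∑' m : ℕ, (((m : ℝ) + 1)⁻¹ - (x + m + 1)⁻¹)

lemma norm_inv_add_one_sub_inv_le {y : ℝ} (hy : 0 ≤ y) (m : ℕ) :
    ‖((m : ℝ) + 1)⁻¹ - (y + m + 1)⁻¹‖ ≤ y * (((m : ℝ) + 1) ^ 2)⁻¹ := by
  have hm : (0 : ℝ) < m + 1 := by positivity
  have key : ((m : ℝ) + 1)⁻¹ - (y + m + 1)⁻¹ = y * ((m + 1) * (y + m + 1))⁻¹ := by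
    field_simp
    ring
  rw [key, Real.norm_of_nonneg (by positivity), sq]
  gcongr
  linarith

lemma hasDerivAt_digammaSeries {x : ℝ} (hx : 0 < x) :
    HasDerivAt digammaSeries (hurwitzSeries 2 x) x := by
  have hpos {y : ℝ} (hy : y ∈ Ioi (-1 / 2)) (m : ℕ) : 1 / 2 + m ≤ y + (m + 1) := by
    have : -1 / 2 < y := hy
    linarith
  have hterm (m : ℕ) (y : ℝ) (hy : y ∈ Ioi (-1 / 2)) :
      HasDerivAt (fun z : ℝ => ((m : ℝ) + 1)⁻¹ - (z + m + 1)⁻¹) (((y + m + 1) ^ 2)⁻¹) y := by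
    have hne : y + (m + 1) ≠ 0 := ((by positivity : (0 : ℝ) < 1 / 2 + m).trans_le (hpos hy m)).ne'
    simpa [add_assoc] using
      ((hasDerivAt_inv hne).comp_add_const y ((m : ℝ) + 1)).const_sub (((m : ℝ) + 1)⁻¹)
  -- The terms vanish at `0`, and on `Ioi (-1/2)` their derivatives are at most `(1/2 + m)⁻²`.
  have hseries : HasDerivAt (fun z : ℝ => ∑' m : ℕ, (((m : ℝ) + 1)⁻¹ - (z + m + 1)⁻¹))
      (∑' m : ℕ, ((x + m + 1) ^ 2)⁻¹) x := by
    refine hasDerivAt_tsum_of_isPreconnected (summable_inv_add_nat_pow le_rfl (1 / 2)) isOpen_Ioi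
      isPreconnected_Ioi hterm (fun m y hy => ?_) (y₀ := 0) (by norm_num) (by simp)
      (show x ∈ Ioi (-1 / 2) by simp only [mem_Ioi]; linarith)
    have hle := hpos hy m
    rw [Real.norm_of_nonneg (by positivity), add_assoc]
    gcongr
  refine (((hasDerivAt_inv hx.ne').const_sub _).add hseries).congr_deriv ?_
  rw [hurwitzSeries, (summable_inv_add_nat_pow le_rfl x).tsum_eq_zero_add]
  push_cast
  simp [add_assoc]

open Real.BohrMollerup in
lemma hasDerivAt_logGammaSeq (n : ℕ) {y : ℝ} (hy : 0 < y) :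
    HasDerivAt (logGammaSeq · n) (Real.log n - ∑ m ∈ Finset.range (n + 1), (y + m)⁻¹) y := by
  have hlog : HasDerivAt (fun z => ∑ m ∈ Finset.range (n + 1), Real.log (z + m))
      (∑ m ∈ Finset.range (n + 1), (y + m)⁻¹) y :=
    .fun_sum fun m _ => (Real.hasDerivAt_log (by positivity)).comp_add_const y (m : ℝ)
  simpa [logGammaSeq] using
    (((hasDerivAt_id y).mul_const (Real.log n)).add_const (Real.log n.factorial)).fun_sub hlog

lemma log_sub_sum_inv_eq (n : ℕ) (y : ℝ) :
    Real.log n - ∑ m ∈ Finset.range (n + 1), (y + m)⁻¹ = (Real.log n - harmonic n) - y⁻¹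
      + ∑ m ∈ Finset.range n, (((m : ℝ) + 1)⁻¹ - (y + m + 1)⁻¹) := by
  rw [Finset.sum_range_succ', Finset.sum_sub_distrib, harmonic]
  push_cast
  simp only [add_assoc, add_zero]
  ring

lemma tendstoUniformlyOn_log_sub_sum_inv (b : ℝ) :
    TendstoUniformlyOn (fun (n : ℕ) (y : ℝ) => Real.log n - ∑ m ∈ Finset.range (n + 1), (y + m)⁻¹)
      digammaSeries atTop (Ioo 0 b) := by
  have hconst : Tendsto (fun n : ℕ => Real.log n - harmonic n) atTop
      (𝓝 (-Real.eulerMascheroniConstant)) := by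
    simpa using Real.tendsto_harmonic_sub_log.neg
  have hinv : TendstoUniformlyOn (fun (_ : ℕ) (y : ℝ) => y⁻¹) (·⁻¹) atTop (Ioo 0 b) :=
    fun _ hu => .of_forall fun _ _ _ => refl_mem_uniformity hu
  have hbound (m : ℕ) (y : ℝ) (hy : y ∈ Ioo 0 b) :
      ‖((m : ℝ) + 1)⁻¹ - (y + m + 1)⁻¹‖ ≤ b * (((1 : ℝ) + m) ^ 2)⁻¹ := by
    refine (norm_inv_add_one_sub_inv_le hy.1.le m).trans ?_
    rw [add_comm (1 : ℝ)]
    gcongr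
    exact hy.2.le
  have hseries := tendstoUniformlyOn_tsum_nat
    ((summable_inv_add_nat_pow le_rfl 1).mul_left b) hbound
  refine (((hconst.tendstoUniformlyOn_const _).sub hinv).add hseries).congr ?_ |>.congr_right ?_
  · exact .of_forall fun n y _ => by simp [log_sub_sum_inv_eq]
  · intro y _
    simp [digammaSeries]

lemma hasDerivAt_log_Gamma {x : ℝ} (hx : 0 < x) :
    HasDerivAt (fun y => Real.log (Real.Gamma y)) (digammaSeries x) x :=
  hasDerivAt_of_tendstoUniformlyOn isOpen_Ioo (tendstoUniformlyOn_log_sub_sum_inv (x + 1))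
    (.of_forall fun n _ hy => hasDerivAt_logGammaSeq n hy.1)
    (fun _ hy => Real.BohrMollerup.tendsto_log_gamma hy.1) ⟨hx, lt_add_one x⟩

lemma hasDerivAt_digamma {x : ℝ} (hx : 0 < x) : HasDerivAt digamma (hurwitzSeries 2 x) x := by
  have : digamma =ᶠ[𝓝 x] digammaSeries :=
    (eventually_gt_nhds hx).mono fun _ hy => (hasDerivAt_log_Gamma hy).deriv
  exact (hasDerivAt_digammaSeries hx).congr_of_eventuallyEq this

lemma polygamma_eqOn {i : ℕ} (hi : 1 ≤ i) :
    EqOn (polygamma i) (fun x => (-1) ^ (i + 1) * i.factorial * hurwitzSeries (i + 1) x)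
      (Ioi 0) := by
  induction i, hi using Nat.le_induction with
  | base =>
    intro x hx
    simp [polygamma, (hasDerivAt_digamma hx).deriv]
  | succ i hi ih =>
    intro x (hx : 0 < x)
    rw [polygamma, iteratedDeriv_succ, ← polygamma,
      (ih.eventuallyEq_of_mem (Ioi_mem_nhds hx)).deriv_eq,
      ((hasDerivAt_hurwitzSeries (by omega) hx).const_mul _).deriv, Nat.factorial_succ]
    push_cast
    ring

lemma abs_polygamma {i : ℕ} (hi : 1 ≤ i) {x : ℝ} (hx : 0 < x) :
    |polygamma i x| = i.factorial * hurwitzSeries (i + 1) x := by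
  rw [polygamma_eqOn hi hx, abs_mul, abs_mul, abs_pow, abs_neg, abs_one, one_pow, one_mul,
    Nat.abs_cast, abs_of_pos (hurwitzSeries_pos (by omega) hx)]

lemma tendsto_abs_polygamma_atTop {i : ℕ} (hi : 1 ≤ i) :
    Tendsto (fun x => |polygamma i x|) atTop (𝓝 0) := by
  have := (tendsto_hurwitzSeries_atTop (k := i + 1) (by omega)).const_mul (i.factorial : ℝ)
  rw [mul_zero] at this
  exact this.congr' <| (eventually_gt_atTop 0).mono fun x hx => (abs_polygamma hi hx).symm

lemma abs_polygamma_strictAntiOn {i : ℕ} (hi : 1 ≤ i) :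
    StrictAntiOn (fun x => |polygamma i x|) (Ioi 0) := by
  intro x hx x' hx' hxx'
  simp only [abs_polygamma hi hx, abs_polygamma hi hx']
  gcongr
  exact hurwitzSeries_strictAntiOn (by omega) hx hx' hxx'

theorem stmt19 (i : ℕ) (hi : 0 < i) (y : ℝ) (hy : 1 < y) :
    Filter.Tendsto (fun x : ℝ => |polygamma i x| + |polygamma i y| - |polygamma i (x * y)|)
      Filter.atTop (nhds |polygamma i y|) ∧
    ∀ x : ℝ, 0 < x → 0 < |polygamma i x| + |polygamma i y| - |polygamma i (x * y)| := by
  have hy0 : 0 < y := by linarith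
  refine ⟨?_, fun x hx => ?_⟩
  · have h0 := tendsto_abs_polygamma_atTop hi
    simpa using (h0.add_const _).sub (h0.comp (tendsto_id.atTop_mul_const hy0))
  · have hxy : x < x * y := lt_mul_of_one_lt_right hx hy
    have := abs_polygamma_strictAntiOn hi hx (hx.trans hxy : 0 < x * y) hxy
    linarith [abs_nonneg (polygamma i y)]
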